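/- For x, y ∈ ℝⁿ, if ⟨x, y⟩ = ⟨x↓, y↓⟩ then there exists a single permutation σ of {1,…,n} such that σ·x = x↓ and σ·y = y↓. -/

import Mathlib

/-!
Equality in the rearrangement inequality forces `x` and `y` to monovary: reindexing both by the
permutation sorting `x` turns the hypothesis into an equality case for the sorted vectors, and
those equality cases are exactly the monovarying rearrangements. Sorting the indices
lexicographically by `(x i, y i)` (decreasingly) then yields one permutation along which both
vectors are antitone, and an antitone rearrangement of a vector is its decreasing rearrangement.
-/

open Finset

/-- Decreasing rearrangement of a vector in ℝⁿ. -/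
noncomputable def dsort {n : ℕ} (v : Fin n → ℝ) : Fin n → ℝ :=
  fun i => - ((fun j => - v j) ∘ Tuple.sort (fun j => - v j)) i

lemma dsort_eq_comp_sort {n : ℕ} (v : Fin n → ℝ) :
    dsort v = v ∘ Tuple.sort (fun j => -v j) := by
  ext i
  simp [dsort]

lemma antitone_dsort {n : ℕ} (v : Fin n → ℝ) : Antitone (dsort v) := by
  simpa [dsort_eq_comp_sort, Function.comp_def] using
    (Tuple.monotone_sort fun j => -v j).neg

lemma comp_perm_eq_dsort_of_antitone {n : ℕ} {v : Fin n → ℝ} {σ : Equiv.Perm (Fin n)}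
    (h : Antitone (v ∘ σ)) : v ∘ σ = dsort v := by
  have hsort := (Tuple.comp_sort_eq_comp_iff_monotone (f := fun j => -v j) (σ := σ)).mpr h.neg
  rw [dsort_eq_comp_sort]
  ext i
  simpa using congrFun hsort i

theorem Monovary.exists_perm_antitone {α β : Type*} [LinearOrder α] [LinearOrder β] {n : ℕ}
    {x : Fin n → α} {y : Fin n → β} (hxy : Monovary x y) :
    ∃ σ : Equiv.Perm (Fin n), Antitone (x ∘ σ) ∧ Antitone (y ∘ σ) := by
  set f : Fin n → αᵒᵈ ×ₗ βᵒᵈ := fun i => toLex (OrderDual.toDual (x i), OrderDual.toDual (y i))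
  set σ := Tuple.sort f
  have hσ {i j : Fin n} (hij : i ≤ j) :
      x (σ j) < x (σ i) ∨ x (σ i) = x (σ j) ∧ y (σ j) ≤ y (σ i) := by
    simpa [f] using Prod.Lex.le_iff.mp (Tuple.monotone_sort f hij)
  refine ⟨σ, fun i j hij => ?_, fun i j hij => ?_⟩ <;> rcases hσ hij with hlt | ⟨heq, hle⟩
  · exact hlt.le
  · exact heq.ge
  · exact not_lt.mp fun hy => (hxy hy).not_gt hlt
  · exact hle

lemma monovary_of_sum_mul_eq_sum_dsort_mul {n : ℕ} {x y : Fin n → ℝ}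
    (heq : ∑ i, x i * y i = ∑ i, dsort x i * dsort y i) : Monovary x y := by
  set τx := Tuple.sort (fun j => -x j)
  set τy := Tuple.sort (fun j => -y j)
  have hdsort : Monovary (dsort x) (dsort y) := (antitone_dsort x).monovary (antitone_dsort y)
  have hperm : dsort y ∘ (τx.trans τy.symm) = y ∘ τx := by
    ext k
    simp [dsort_eq_comp_sort, τx, τy]
  have hsum : ∑ k, dsort x k * dsort y ((τx.trans τy.symm) k) = ∑ k, dsort x k * dsort y k := by
    rw [← heq, ← Equiv.sum_comp τx (fun i => x i * y i)]
    exact sum_congr rfl fun k _ => by simp [dsort_eq_comp_sort, τx, τy]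
  have hτ : Monovary (x ∘ τx) (y ∘ τx) := by
    have h := hdsort.sum_mul_comp_perm_eq_sum_mul_iff.mp hsum
    rwa [hperm, dsort_eq_comp_sort x] at h
  simpa [Function.comp_def] using hτ.comp_right τx.symm

theorem stmt8 {n : ℕ} (x y : Fin n → ℝ)
    (heq : ∑ i, x i * y i = ∑ i, dsort x i * dsort y i) :
    ∃ σ : Equiv.Perm (Fin n),
      (fun i => x (σ i)) = dsort x ∧ (fun i => y (σ i)) = dsort y := by
  obtain ⟨σ, hx, hy⟩ := (monovary_of_sum_mul_eq_sum_dsort_mul heq).exists_perm_antitone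
  exact ⟨σ, comp_perm_eq_dsort_of_antitone hx, comp_perm_eq_dsort_of_antitone hy⟩
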